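/- For the bi-periodic Fibonacci and Lucas sequences and all n ≥ 1, (ab + 4)·q_n = l_{n+1} + l_{n−1}. -/

import Mathlib

/-!
Both `l (n + 2) + l n` and `(a * b + 4) * q (n + 1)` satisfy, in `n`, the recurrence of `q (n + 1)`
with its parity-dependent coefficient, so they agree once they agree for `n = 0, 1`.
-/

/-- Bi-periodic Fibonacci sequence: q 0 = 0, q 1 = 1,
    q n = a * q (n-1) + q (n-2) if n even, q n = b * q (n-1) + q (n-2) if n odd. -/
def bpFib (a b : ℝ) : ℕ → ℝ
  | 0 => 0
  | 1 => 1
  | n + 2 => (if Even (n + 2) then a else b) * bpFib a b (n + 1) + bpFib a b n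

/-- Bi-periodic Lucas sequence: l 0 = 2, l 1 = a,
    l n = b * l (n-1) + l (n-2) if n even, l n = a * l (n-1) + l (n-2) if n odd. -/
def bpLucas (a b : ℝ) : ℕ → ℝ
  | 0 => 2
  | 1 => a
  | n + 2 => (if Even (n + 2) then b else a) * bpLucas a b (n + 1) + bpLucas a b n

namespace BiperiodicSeq

variable (a b : ℝ) {n : ℕ}

theorem bpFib_add_two_of_even (hn : Even n) :
    bpFib a b (n + 2) = a * bpFib a b (n + 1) + bpFib a b n := by
  rw [bpFib, if_pos (hn.add even_two)]

theorem bpFib_add_two_of_odd (hn : Odd n) :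
    bpFib a b (n + 2) = b * bpFib a b (n + 1) + bpFib a b n := by
  rw [bpFib, if_neg (Nat.not_even_iff_odd.mpr (hn.add_even even_two))]

theorem bpLucas_add_two_of_even (hn : Even n) :
    bpLucas a b (n + 2) = b * bpLucas a b (n + 1) + bpLucas a b n := by
  rw [bpLucas, if_pos (hn.add even_two)]

theorem bpLucas_add_two_of_odd (hn : Odd n) :
    bpLucas a b (n + 2) = a * bpLucas a b (n + 1) + bpLucas a b n := by
  rw [bpLucas, if_neg (Nat.not_even_iff_odd.mpr (hn.add_even even_two))]

theorem bpLucas_add_two_add_bpLucas (n : ℕ) :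
    bpLucas a b (n + 2) + bpLucas a b n = (a * b + 4) * bpFib a b (n + 1) := by
  induction n using Nat.twoStepInduction with
  | zero => norm_num [bpLucas, bpFib]; ring
  | one => norm_num [bpLucas, bpFib]; ring
  | more n ih₀ ih₁ =>
    rcases Nat.even_or_odd n with hn | hn
    · have hl := bpLucas_add_two_of_even a b hn
      have hl' := bpLucas_add_two_of_even a b (n := n + 2) (hn.add even_two)
      have hq := bpFib_add_two_of_odd a b (n := n + 1) hn.add_one
      linear_combination hl' + b * ih₁ + ih₀ - (a * b + 4) * hq + hl
    · have hl := bpLucas_add_two_of_odd a b hn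
      have hl' := bpLucas_add_two_of_odd a b (n := n + 2) (hn.add_even even_two)
      have hq := bpFib_add_two_of_even a b (n := n + 1) hn.add_one
      linear_combination hl' + a * ih₁ + ih₀ - (a * b + 4) * hq + hl

end BiperiodicSeq

open BiperiodicSeq in
theorem bpLucas_sum (a b : ℝ) (n : ℕ) (hn : 1 ≤ n) :
    (a * b + 4) * bpFib a b n = bpLucas a b (n + 1) + bpLucas a b (n - 1) := by
  obtain ⟨m, rfl⟩ := Nat.exists_eq_add_of_le' hn
  exact (bpLucas_add_two_add_bpLucas a b m).symm
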